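/- Let K be a field, S = K[x_1, …, x_n], D an integral domain, and φ : S → D a K-algebra homomorphism whose kernel I is generated by a set B of pure binomials m − m′ (differences of two monomials). Let V ⊆ {x_1, …, x_n} be a subset of the variables such that for every generator m − m′ ∈ B, the monomial m involves some variable of V if and only if m′ involves some variable of V. Define φ_V : S → D by φ_V(x_i) = 0 for x_i ∈ V and φ_V(x_i) = φ(x_i) otherwise. Then ker φ_V = I + (x_i : x_i ∈ V); in particular I + (x_i : x_i ∈ V) is a prime ideal of S. -/

import Mathlib

/-!
Let `ρ : S → S` set the variables of `V` to zero, so that `φ_V = φ ∘ ρ`, and let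
`J = (x_i : i ∈ V)`. Since `ρ` is the identity modulo `J`, every `f` splits as
`ρ f + (f - ρ f)` with the second summand in `J`; so if `f ∈ ker φ_V` then `f ∈ I + J`.
Conversely `ρ` kills `J`, and it maps `I` into itself because on a generator `m - m'` it
acts either as `0` (both monomials involve `V`) or as the identity (neither does).
-/

open MvPolynomial

namespace MvPolynomial

variable {σ R : Type*} [CommRing R] (V : Set σ) [DecidablePred (· ∈ V)]

noncomputable def zeroVars : MvPolynomial σ R →ₐ[R] MvPolynomial σ R :=
  aeval fun i => if i ∈ V then 0 else X i

variable {V}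

theorem zeroVars_monomial_of_exists {d : σ →₀ ℕ} (c : R) (h : ∃ i ∈ V, d i ≠ 0) :
    zeroVars V (monomial d c) = 0 := by
  obtain ⟨i, hiV, hdi⟩ := h
  have hdvd := map_dvd (zeroVars V) (X_dvd_monomial.mpr (Or.inr hdi) : X i ∣ monomial d c)
  simpa [zeroVars, hiV] using hdvd

theorem zeroVars_monomial_of_forall {d : σ →₀ ℕ} (c : R) (h : ∀ i ∈ V, d i = 0) :
    zeroVars V (monomial d c) = monomial d c := by
  conv_rhs => rw [← aeval_X_left_apply (monomial d c)]
  rw [zeroVars, aeval_monomial, aeval_monomial]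
  congr 1
  refine Finset.prod_congr rfl fun i hi => ?_
  dsimp only
  rw [if_neg fun hiV => Finsupp.mem_support_iff.mp hi (h i hiV)]

theorem mkₐ_comp_zeroVars :
    (Ideal.Quotient.mkₐ R (Ideal.span (X '' V))).comp (zeroVars V) =
      Ideal.Quotient.mkₐ R (Ideal.span ((X : σ → MvPolynomial σ R) '' V)) := by
  refine algHom_ext fun i => ?_
  by_cases hi : i ∈ V
  · simpa [zeroVars, hi, eq_comm (a := (0 : _ ⧸ _)), Ideal.Quotient.eq_zero_iff_mem]
      using Ideal.subset_span (Set.mem_image_of_mem X hi)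
  · simp [zeroVars, hi]

theorem sub_zeroVars_mem_span (f : MvPolynomial σ R) :
    f - zeroVars V f ∈ Ideal.span (X '' V) := by
  rw [← Ideal.Quotient.eq, ← Ideal.Quotient.mkₐ_eq_mk R, ← AlgHom.comp_apply, mkₐ_comp_zeroVars]

theorem zeroVars_binomial_eq_zero_or_eq {d d' : σ →₀ ℕ}
    (h : (∃ i ∈ V, d i ≠ 0) ↔ (∃ i ∈ V, d' i ≠ 0)) :
    zeroVars V (monomial d 1 - monomial d' 1 : MvPolynomial σ R) = 0 ∨
      zeroVars V (monomial d 1 - monomial d' 1 : MvPolynomial σ R) =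
        monomial d 1 - monomial d' 1 := by
  by_cases hd : ∃ i ∈ V, d i ≠ 0
  · left
    rw [map_sub, zeroVars_monomial_of_exists _ hd, zeroVars_monomial_of_exists _ (h.mp hd),
      sub_zero]
  · right
    have hd' := mt h.mpr hd
    push Not at hd hd'
    rw [map_sub, zeroVars_monomial_of_forall _ hd, zeroVars_monomial_of_forall _ hd']

variable {A : Type*} [CommRing A] [Algebra R A] (φ : MvPolynomial σ R →ₐ[R] A)

theorem comp_zeroVars : φ.comp (zeroVars V) = aeval fun i => if i ∈ V then 0 else φ (X i) := by
  rw [zeroVars, comp_aeval]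
  simp only [apply_ite, map_zero]

theorem ker_comp_zeroVars
    (hφ : RingHom.ker (φ : MvPolynomial σ R →+* A) ≤
      (RingHom.ker (φ : MvPolynomial σ R →+* A)).comap (zeroVars V)) :
    RingHom.ker (φ.comp (zeroVars V) : MvPolynomial σ R →+* A) =
      RingHom.ker (φ : MvPolynomial σ R →+* A) ⊔ Ideal.span (X '' V) := by
  refine le_antisymm (fun f hf => ?_) (sup_le (fun f hf => hφ hf) ?_)
  · rw [← add_sub_cancel (zeroVars V f) f]
    exact Ideal.add_mem _ (Ideal.mem_sup_left hf) (Ideal.mem_sup_right (sub_zeroVars_mem_span f))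
  · rw [Ideal.span_le]
    rintro _ ⟨i, hi, rfl⟩
    simp [RingHom.mem_ker, zeroVars, hi]

end MvPolynomial

/-- Let `φ : K[x₁,…,x_n] → D` (`D` a domain) have kernel `I` generated by pure binomials
`m − m′` such that `m` involves a variable of `V` iff `m′` does. Setting the variables of `V`
to zero in `φ` yields `φ_V` with `ker φ_V = I + (x_i : i ∈ V)`; in particular this ideal is
prime. -/
theorem kernel_binomial_vanishing {K D : Type*} [Field K] [CommRing D] [IsDomain D]
    [Algebra K D] {n : ℕ} (φ : MvPolynomial (Fin n) K →ₐ[K] D)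
    (B : Set (MvPolynomial (Fin n) K))
    (hgen : Ideal.span B = RingHom.ker (φ : MvPolynomial (Fin n) K →+* D))
    (V : Set (Fin n)) [DecidablePred (· ∈ V)]
    (hbin : ∀ b ∈ B, ∃ d d' : Fin n →₀ ℕ,
      b = monomial d 1 - monomial d' 1 ∧
        ((∃ i ∈ V, d i ≠ 0) ↔ (∃ i ∈ V, d' i ≠ 0))) :
    RingHom.ker
        ((aeval fun i => if i ∈ V then (0 : D) else φ (X i) :
            MvPolynomial (Fin n) K →ₐ[K] D) :
          MvPolynomial (Fin n) K →+* D)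
      = Ideal.span B ⊔ Ideal.span ((fun i => (X i : MvPolynomial (Fin n) K)) '' V)
    ∧ (Ideal.span B ⊔
        Ideal.span ((fun i => (X i : MvPolynomial (Fin n) K)) '' V)).IsPrime := by
  have hB : B ⊆ (Ideal.span B).comap (zeroVars V) := by
    intro b hb
    obtain ⟨d, d', rfl, hV⟩ := hbin b hb
    rcases zeroVars_binomial_eq_zero_or_eq (R := K) hV with h | h <;>
      rw [SetLike.mem_coe, Ideal.mem_comap, h]
    · exact zero_mem _
    · exact Ideal.subset_span hb
  have hker := ker_comp_zeroVars φ (hgen ▸ Ideal.span_le.mpr hB)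
  rw [comp_zeroVars, ← hgen] at hker
  exact ⟨hker, hker ▸ RingHom.ker_isPrime _⟩
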